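/- For all n ≥ 1, the cylinder [.w_n l_n] is the disjoint union of the cylinders [.w_{n+1} b], [.w_{n+1} c], and [.w_{n+1} d]. -/

import Mathlib

/-!
The fixed point `ξ` is a Toeplitz sequence: writing `τ = midLetter`, the
letter at position `2^v * (odd)` is `τ^[v] a`. Hence `w_n` fills positions `1, …, 2^n - 1` of
every block of length `2^n`, and `l_n = τ^[n] a` sits at position `2^n`. An occurrence of
`w_n l_n` can only start at a multiple of `2^n`: otherwise, by induction, it starts at an odd
multiple of `2^(n-1)`, and then the letter `τ^[n-1] a` stands where `w_n l_n` has `τ^[n] a`,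
which is impossible as `τ` has no fixed point. An aligned occurrence continues as
`w_n l_n w_n x` with `x` at an even position, so `x ≠ a`.
-/

inductive A : Type
  | a | b | c | d
deriving DecidableEq

def subst : A → List A
  | A.a => [A.a, A.c, A.a]
  | A.b => [A.d]
  | A.c => [A.b]
  | A.d => [A.c]

def substW (u : List A) : List A := u.flatMap subst

def wrd (n : ℕ) : List A := substW^[n - 1] [A.a]

def ltr (n : ℕ) : List A := substW^[n - 1] [A.c]

def seg (ξ : ℕ → A) (s m : ℕ) : List A := (List.range m).map fun i => ξ (s + 1 + i)

def IsFixed (ξ : ℕ → A) : Prop :=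
  ∀ N : ℕ, seg ξ 0 ((substW (seg ξ 0 N)).length) = substW (seg ξ 0 N)

/-- The phase space of the subshift: bi-infinite sequences all of whose finite
factors occur in the fixed point `ξ`. -/
def Omega (ξ : ℕ → A) : Set (ℤ → A) :=
  {ω | ∀ (s : ℤ) (m : ℕ), ∃ t : ℕ,
    seg ξ t m = (List.range m).map fun i => ω (s + 1 + (i : ℤ))}

/-- The `N`-th power of the shift map `T`. -/
def shiftN (N : ℤ) (ω : ℤ → A) : ℤ → A := fun i => ω (i + N)

/-- The cylinder `[u.v]` inside `Omega ξ`. -/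
def cyl (ξ : ℕ → A) (u v : List A) : Set (ℤ → A) :=
  {ω | ω ∈ Omega ξ ∧
    (List.range u.length).map (fun i => ω (1 + (i : ℤ) - u.length)) = u ∧
    (List.range v.length).map (fun i => ω (1 + (i : ℤ))) = v}

/-- The cylinder `[.v]` with empty past word. -/
def cylF (ξ : ℕ → A) (v : List A) : Set (ℤ → A) := cyl ξ [] v

-- The middle letter of `σ x`; `ξ` has it at position `2m` when it has `x` at position `m`.
def midLetter : A → A
  | A.a => A.c
  | A.b => A.d
  | A.c => A.b
  | A.d => A.c

lemma midLetter_ne_a (x : A) : midLetter x ≠ A.a := by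
  cases x <;> decide

lemma midLetter_ne_self (x : A) : midLetter x ≠ x := by
  cases x <;> decide

lemma subst_of_ne_a {x : A} (hx : x ≠ A.a) : subst x = [midLetter x] := by
  cases x <;> simp_all [subst, midLetter]

lemma midLetter_iterate_ne_a {n : ℕ} (hn : n ≠ 0) : midLetter^[n] A.a ≠ A.a := by
  obtain ⟨k, rfl⟩ := Nat.exists_eq_succ_of_ne_zero hn
  rw [Function.iterate_succ_apply']
  exact midLetter_ne_a _

lemma substW_append (u v : List A) : substW (u ++ v) = substW u ++ substW v :=
  List.flatMap_append

lemma substW_iterate_append (k : ℕ) (u v : List A) :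
    substW^[k] (u ++ v) = substW^[k] u ++ substW^[k] v := by
  induction k generalizing u v with
  | zero => rfl
  | succ k ih => simp only [Function.iterate_succ_apply, substW_append, ih]

lemma wrd_succ_eq_substW {n : ℕ} (hn : 1 ≤ n) : wrd (n + 1) = substW (wrd n) := by
  obtain ⟨k, rfl⟩ := Nat.exists_eq_add_of_le' hn
  exact Function.iterate_succ_apply' substW k [A.a]

lemma ltr_succ_eq_substW {n : ℕ} (hn : 1 ≤ n) : ltr (n + 1) = substW (ltr n) := by
  obtain ⟨k, rfl⟩ := Nat.exists_eq_add_of_le' hn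
  exact Function.iterate_succ_apply' substW k [A.c]

lemma ltr_eq {n : ℕ} (hn : 1 ≤ n) : ltr n = [midLetter^[n] A.a] := by
  induction n, hn using Nat.le_induction with
  | base => rfl
  | succ n hn ih =>
    rw [ltr_succ_eq_substW hn, ih, substW, List.flatMap_singleton,
      subst_of_ne_a (midLetter_iterate_ne_a (by omega)), Function.iterate_succ_apply']

lemma wrd_succ {n : ℕ} (hn : 1 ≤ n) : wrd (n + 1) = wrd n ++ ltr n ++ wrd n := by
  obtain ⟨k, rfl⟩ := Nat.exists_eq_add_of_le' hn
  show substW^[k] (substW [A.a]) = _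
  rw [show substW [A.a] = [A.a] ++ [A.c] ++ [A.a] from rfl, substW_iterate_append,
    substW_iterate_append]
  rfl

def toeplitz (m : ℕ) : A := midLetter^[padicValNat 2 m] A.a

lemma toeplitz_of_odd {m : ℕ} (hm : Odd m) : toeplitz m = A.a := by
  rw [toeplitz, padicValNat.eq_zero_of_not_dvd (Nat.two_dvd_ne_zero.mpr (Nat.odd_iff.mp hm))]
  rfl

lemma toeplitz_two_mul {m : ℕ} (hm : m ≠ 0) : toeplitz (2 * m) = midLetter (toeplitz m) := by
  rw [toeplitz, padicValNat.mul two_ne_zero hm, padicValNat_self, add_comm,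
    Function.iterate_succ_apply']
  rfl

lemma toeplitz_two_pow_mul_odd (n : ℕ) {k : ℕ} (hk : Odd k) :
    toeplitz (2 ^ n * k) = midLetter^[n] A.a := by
  induction n with
  | zero => simpa using toeplitz_of_odd hk
  | succ n ih =>
    rw [pow_succ', mul_assoc, toeplitz_two_mul (mul_ne_zero (by positivity) hk.pos.ne'), ih,
      Function.iterate_succ_apply']

lemma toeplitz_add_two_pow_mul {n j : ℕ} (hj0 : j ≠ 0) (hj : j < 2 ^ n) (k : ℕ) :
    toeplitz (j + 2 ^ n * k) = toeplitz j := by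
  induction n generalizing j with
  | zero => omega
  | succ n ih =>
    rcases Nat.even_or_odd' j with ⟨i, rfl | rfl⟩
    · rw [pow_succ', mul_assoc, ← mul_add, toeplitz_two_mul (by omega),
        toeplitz_two_mul (by omega), ih (by omega) (by omega)]
    · exact (toeplitz_of_odd ⟨i + 2 ^ n * k, by ring⟩).trans (toeplitz_of_odd ⟨i, rfl⟩).symm

lemma toeplitz_ne_a_of_even {m : ℕ} (hm0 : m ≠ 0) (hm : Even m) : toeplitz m ≠ A.a := by
  obtain ⟨i, rfl⟩ := hm
  rw [← two_mul, toeplitz_two_mul (by omega)]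
  exact midLetter_ne_a _

lemma length_seg (f : ℕ → A) (t m : ℕ) : (seg f t m).length = m := by
  simp [seg]

lemma seg_one (f : ℕ → A) (t : ℕ) : seg f t 1 = [f (t + 1)] := rfl

lemma seg_add (f : ℕ → A) (t m k : ℕ) : seg f t (m + k) = seg f t m ++ seg f (t + m) k := by
  simp only [seg, List.range_add, List.map_append, List.map_map, Function.comp_def]
  congr 3
  funext i
  ring_nf

lemma seg_eq_seg_iff {f g : ℕ → A} {s t m : ℕ} :
    seg f s m = seg g t m ↔ ∀ i < m, f (s + 1 + i) = g (t + 1 + i) := by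
  simp [seg, List.map_inj_left]

lemma seg_take (f : ℕ → A) (t m k : ℕ) : (seg f t m).take k = seg f t (min k m) := by
  simp [seg, ← List.map_take, List.take_range]

lemma toeplitz_two_pow (n : ℕ) : toeplitz (2 ^ n) = midLetter^[n] A.a := by
  simpa using toeplitz_two_pow_mul_odd n odd_one

lemma seg_toeplitz_two_pow_mul (n k : ℕ) :
    seg toeplitz (2 ^ n * k) (2 ^ n - 1) = seg toeplitz 0 (2 ^ n - 1) := by
  refine seg_eq_seg_iff.mpr fun i hi => ?_
  rw [zero_add, add_assoc, add_comm (2 ^ n * k), toeplitz_add_two_pow_mul (by omega) (by omega)]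

lemma wrd_append_ltr_eq_seg_of_wrd_eq {n : ℕ} (hn : 1 ≤ n)
    (h : wrd n = seg toeplitz 0 (2 ^ n - 1)) :
    wrd n ++ ltr n = seg toeplitz 0 (2 ^ n) := by
  have hp : 1 ≤ 2 ^ n := Nat.one_le_two_pow
  rw [← Nat.sub_add_cancel hp, seg_add, seg_one, ← h, ltr_eq hn, zero_add, Nat.sub_add_cancel hp,
    toeplitz_two_pow]

lemma wrd_eq_seg {n : ℕ} (hn : 1 ≤ n) : wrd n = seg toeplitz 0 (2 ^ n - 1) := by
  induction n, hn using Nat.le_induction with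
  | base => exact congrArg (· :: []) (toeplitz_of_odd odd_one).symm
  | succ n hn ih =>
    have hp : 1 ≤ 2 ^ n := Nat.one_le_two_pow
    rw [show 2 ^ (n + 1) - 1 = 2 ^ n + (2 ^ n - 1) by rw [pow_succ]; omega, seg_add, zero_add,
      ← wrd_append_ltr_eq_seg_of_wrd_eq hn ih, wrd_succ hn, ih]
    simpa using (seg_toeplitz_two_pow_mul n 1).symm

lemma wrd_append_ltr_eq_seg {n : ℕ} (hn : 1 ≤ n) : wrd n ++ ltr n = seg toeplitz 0 (2 ^ n) :=
  wrd_append_ltr_eq_seg_of_wrd_eq hn (wrd_eq_seg hn)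

lemma two_pow_dvd_of_toeplitz_add_eq {n t : ℕ}
    (h : ∀ i, 0 < i → i ≤ 2 ^ n → toeplitz (t + i) = toeplitz i) : 2 ^ n ∣ t := by
  induction n with
  | zero => exact one_dvd t
  | succ n ih =>
    obtain ⟨k, rfl⟩ :=
      ih fun i hi hin => h i hi (hin.trans (Nat.pow_le_pow_right two_pos n.le_succ))
    rcases Nat.even_or_odd' k with ⟨j, rfl | rfl⟩
    · exact ⟨j, by ring⟩
    · have hlast := h (2 ^ (n + 1)) (by positivity) le_rfl
      rw [show 2 ^ n * (2 * j + 1) + 2 ^ (n + 1) = 2 ^ n * (2 * (j + 1) + 1) by ring,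
        toeplitz_two_pow_mul_odd n ⟨j + 1, rfl⟩, toeplitz_two_pow,
        Function.iterate_succ_apply'] at hlast
      exact absurd hlast.symm (midLetter_ne_self _)

lemma seg_toeplitz_extend {n t : ℕ} (hn : 1 ≤ n) (h : seg toeplitz t (2 ^ n) = wrd n ++ ltr n) :
    ∃ x ≠ A.a, seg toeplitz t (2 ^ (n + 1)) = wrd (n + 1) ++ [x] := by
  have hp : 1 ≤ 2 ^ n := Nat.one_le_two_pow
  have h_shift := seg_eq_seg_iff.mp (h.trans (wrd_append_ltr_eq_seg hn))
  obtain ⟨k, rfl⟩ : 2 ^ n ∣ t := two_pow_dvd_of_toeplitz_add_eq fun i hi hin => by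
    simpa [show t + 1 + (i - 1) = t + i by omega, show 1 + (i - 1) = i by omega]
      using h_shift (i - 1) (by omega)
  refine ⟨toeplitz (2 ^ n * (k + 2)), toeplitz_ne_a_of_even (by positivity)
    ((Nat.even_pow.mpr ⟨even_two, by omega⟩).mul_right _), ?_⟩
  rw [show 2 ^ (n + 1) = 2 ^ n + (2 ^ n - 1) + 1 by rw [pow_succ]; omega, seg_add, seg_add,
    seg_one, h, wrd_succ hn, show 2 ^ n * k + 2 ^ n = 2 ^ n * (k + 1) by ring,
    seg_toeplitz_two_pow_mul, ← wrd_eq_seg hn]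
  congr 3
  zify [hp]
  ring

namespace IsFixed

variable {ξ : ℕ → A}

lemma apply_one (hξ : IsFixed ξ) : ξ 1 = A.a := by
  by_contra hne
  have h := hξ 1
  rw [seg_one, substW, List.flatMap_singleton, subst_of_ne_a hne, List.length_singleton,
    seg_one, List.singleton_inj] at h
  exact midLetter_ne_self _ h.symm

lemma seg_zero_length_wrd (hξ : IsFixed ξ) {n : ℕ} (hn : 1 ≤ n) :
    seg ξ 0 (wrd n).length = wrd n := by
  induction n, hn using Nat.le_induction with
  | base => exact congrArg (· :: []) hξ.apply_one
  | succ n hn ih => simpa only [ih, ← wrd_succ_eq_substW hn] using hξ (wrd n).length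

lemma apply_eq_toeplitz (hξ : IsFixed ξ) {m : ℕ} (hm : m ≠ 0) : ξ m = toeplitz m := by
  have h := hξ.seg_zero_length_wrd (n := m) (by omega)
  rw [wrd_eq_seg (by omega), length_seg, seg_eq_seg_iff] at h
  simpa [show 1 + (m - 1) = m by omega] using h (m - 1) (by have := m.lt_two_pow_self; omega)

lemma seg_eq_seg_toeplitz (hξ : IsFixed ξ) (t m : ℕ) : seg ξ t m = seg toeplitz t m :=
  seg_eq_seg_iff.mpr fun _ _ => hξ.apply_eq_toeplitz (by omega)

end IsFixed

lemma mem_cylF_iff {ξ : ℕ → A} {v : List A} {ω : ℤ → A} :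
    ω ∈ cylF ξ v ↔ ω ∈ Omega ξ ∧ seg (fun i => ω i) 0 v.length = v := by
  simp [cylF, cyl, seg, ← List.map_eq_flatMap, Function.comp_def]

lemma exists_seg_eq_of_mem_Omega {ξ : ℕ → A} {ω : ℤ → A} (hω : ω ∈ Omega ξ) (m : ℕ) :
    ∃ t, seg ξ t m = seg (fun i => ω i) 0 m := by
  simpa [seg, ← List.map_eq_flatMap, Function.comp_def] using hω 0 m

lemma cylF_subset_cylF_of_prefix {ξ : ℕ → A} {u v : List A} (h : u <+: v) :
    cylF ξ v ⊆ cylF ξ u := by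
  intro ω hω
  rw [mem_cylF_iff] at hω ⊢
  refine ⟨hω.1, ?_⟩
  calc seg (fun i => ω i) 0 u.length
      = (seg (fun i => ω i) 0 v.length).take u.length := by rw [seg_take, min_eq_left h.length_le]
    _ = u := by rw [hω.2, ← List.prefix_iff_eq_take.mp h]

lemma disjoint_cylF_append_singleton (ξ : ℕ → A) (u : List A) {x y : A} (hxy : x ≠ y) :
    Disjoint (cylF ξ (u ++ [x])) (cylF ξ (u ++ [y])) := by
  refine Set.disjoint_left.mpr fun ω hx hy => hxy ?_
  have hx' := (mem_cylF_iff.mp hx).2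
  have hy' := (mem_cylF_iff.mp hy).2
  simp only [List.length_append, List.length_singleton] at hx' hy'
  simpa using hx'.symm.trans hy'

lemma exists_mem_cylF_wrd_succ {ξ : ℕ → A} (hξ : IsFixed ξ) {n : ℕ} (hn : 1 ≤ n) {ω : ℤ → A}
    (hω : ω ∈ cylF ξ (wrd n ++ ltr n)) : ∃ x ≠ A.a, ω ∈ cylF ξ (wrd (n + 1) ++ [x]) := by
  rw [mem_cylF_iff, wrd_append_ltr_eq_seg hn, length_seg] at hω
  obtain ⟨t, ht⟩ := exists_seg_eq_of_mem_Omega hω.1 (2 ^ (n + 1))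
  rw [hξ.seg_eq_seg_toeplitz] at ht
  have hpre : seg toeplitz t (2 ^ n) = wrd n ++ ltr n := by
    rw [wrd_append_ltr_eq_seg hn, ← hω.2]
    have h_take := congrArg (List.take (2 ^ n)) ht
    rwa [seg_take, seg_take, min_eq_left (Nat.pow_le_pow_right two_pos n.le_succ)] at h_take
  obtain ⟨x, hxa, hx⟩ := seg_toeplitz_extend hn hpre
  refine ⟨x, hxa, mem_cylF_iff.mpr ⟨hω.1, ?_⟩⟩
  rw [← hx, length_seg, ← ht]

theorem stmt15 (ξ : ℕ → A) (hξ : IsFixed ξ) :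
    ∀ n : ℕ, 1 ≤ n →
      cylF ξ (wrd n ++ ltr n) =
        cylF ξ (wrd (n + 1) ++ [A.b]) ∪ cylF ξ (wrd (n + 1) ++ [A.c]) ∪
          cylF ξ (wrd (n + 1) ++ [A.d]) ∧
      Disjoint (cylF ξ (wrd (n + 1) ++ [A.b])) (cylF ξ (wrd (n + 1) ++ [A.c])) ∧
      Disjoint (cylF ξ (wrd (n + 1) ++ [A.b])) (cylF ξ (wrd (n + 1) ++ [A.d])) ∧
      Disjoint (cylF ξ (wrd (n + 1) ++ [A.c])) (cylF ξ (wrd (n + 1) ++ [A.d])) := by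
  intro n hn
  have hdisj := fun x y (hxy : x ≠ y) => disjoint_cylF_append_singleton ξ (wrd (n + 1)) hxy
  refine ⟨?_, hdisj _ _ (by decide), hdisj _ _ (by decide), hdisj _ _ (by decide)⟩
  have hprefix (x : A) : wrd n ++ ltr n <+: wrd (n + 1) ++ [x] := by
    rw [wrd_succ hn, List.append_assoc]
    exact List.prefix_append _ _
  ext ω
  constructor
  · intro hω
    obtain ⟨x, hxa, hx⟩ := exists_mem_cylF_wrd_succ hξ hn hω
    cases x with
    | a => exact absurd rfl hxa
    | b => exact Or.inl (Or.inl hx)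
    | c => exact Or.inl (Or.inr hx)
    | d => exact Or.inr hx
  · rintro ((h | h) | h) <;> exact cylF_subset_cylF_of_prefix (hprefix _) h
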